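/- arXiv:2410.06833 — 5 statements merged into one kernel-verified Lean document; each statement's English description precedes it below -/
import Mathlib

section
/- Let β > 1, c > 0, u₀ ∈ (0,1], and let u : [0,∞) → [0,1] be the unique solution of u'(t) = u(t)(1-u(t))e^{β(u(t)-1)} with u(0) = u₀. Then the first time t at which 1 - u(t) ≤ e^{-cβ} satisfies inf{t ≥ 0 : 1 - u(t) ≤ e^{-cβ}} ≤ e^{β(1-u₀)}/u₀ + β²·c·e/(β-1). -/
/-!
Write `F u = u (1 - u) e^{β(u-1)}` and `ε = e^{-cβ}`. On `[u₀, 1)` the reciprocal `1 / F` is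
dominated by `M + β e^{β(1-x)} + e / (1-x)` with `M = e^{β(1-u₀)} / u₀`, whose antiderivative
`Φ = timeMajorant β u₀` is explicit. Along the solution `(Φ ∘ u)' = Φ'(u) F(u) ≥ 1`, so as long
as `u` stays below `1 - ε` the elapsed time is at most `Φ(1 - ε) - Φ(u₀) < M + β² c e / (β - 1)`.
-/

open Real Set

theorem monotoneOn_of_hasDerivAt_nonneg {D : Set ℝ} (hD : Convex ℝ D) {f f' : ℝ → ℝ}
    (hf : ∀ x ∈ D, HasDerivAt f (f' x) x) (hf' : ∀ x ∈ D, 0 ≤ f' x) : MonotoneOn f D :=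
  monotoneOn_of_hasDerivWithinAt_nonneg hD
    (fun x hx => (hf x hx).continuousAt.continuousWithinAt)
    (fun x hx => (hf x (interior_subset hx)).hasDerivWithinAt)
    (fun x hx => hf' x (interior_subset hx))

theorem sub_le_sub_of_hasDerivAt_of_one_le {f f' : ℝ → ℝ} {a b : ℝ} (hab : a ≤ b)
    (hf : ∀ t ∈ Icc a b, HasDerivAt f (f' t) t) (hf' : ∀ t ∈ Icc a b, 1 ≤ f' t) :
    b - a ≤ f b - f a := by
  have hmono : MonotoneOn (fun t => f t - t) (Icc a b) :=
    monotoneOn_of_hasDerivAt_nonneg (convex_Icc a b)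
      (fun t ht => (hf t ht).sub (hasDerivAt_id t)) (fun t ht => sub_nonneg.2 (hf' t ht))
  have := hmono (left_mem_Icc.2 hab) (right_mem_Icc.2 hab) hab
  simp only at this
  linarith

theorem exp_mul_div_le {β y : ℝ} (hβ : 0 ≤ β) (hy : 0 < y) :
    exp (β * y) / y ≤ β * exp (β * y) + exp 1 / y := by
  rcases le_or_gt (β * y) 1 with hsmall | hlarge
  · have : exp (β * y) / y ≤ exp 1 / y := by gcongr
    have : 0 ≤ β * exp (β * y) := by positivity
    linarith
  · have : exp (β * y) / y ≤ β * exp (β * y) := by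
      rw [div_le_iff₀ hy]
      nlinarith [exp_pos (β * y)]
    have : 0 ≤ exp 1 / y := by positivity
    linarith

section TimeMajorant

variable {β u₀ x : ℝ}

noncomputable def timeMajorant (β u₀ x : ℝ) : ℝ :=
  exp (β * (1 - u₀)) / u₀ * x - exp (β * (1 - x)) - exp 1 * log (1 - x)

theorem hasDerivAt_timeMajorant (hx : x < 1) :
    HasDerivAt (timeMajorant β u₀)
      (exp (β * (1 - u₀)) / u₀ + β * exp (β * (1 - x)) + exp 1 / (1 - x)) x := by
  have hsub : HasDerivAt (fun x : ℝ => 1 - x) (-1) x := by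
    simpa using (hasDerivAt_id x).const_sub 1
  have hexp := (hsub.const_mul β).exp
  have hlog := hsub.log (sub_ne_zero.2 hx.ne')
  exact ((((hasDerivAt_id x).const_mul (exp (β * (1 - u₀)) / u₀)).sub hexp).sub
    (hlog.const_mul (exp 1))).congr_deriv (by ring)

theorem one_le_deriv_timeMajorant_mul (hβ : 0 ≤ β) (hu₀ : 0 < u₀) (hx₀ : u₀ ≤ x) (hx : x < 1) :
    1 ≤ (exp (β * (1 - u₀)) / u₀ + β * exp (β * (1 - x)) + exp 1 / (1 - x)) *
      (x * (1 - x) * exp (β * (x - 1))) := by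
  have hx0 : 0 < x := hu₀.trans_le hx₀
  have h1x : 0 < 1 - x := sub_pos.2 hx
  have hfirst : exp (β * (1 - x)) / x ≤ exp (β * (1 - u₀)) / u₀ :=
    div_le_div₀ (exp_pos _).le (exp_le_exp.2 (by nlinarith)) hu₀ hx₀
  have hsecond := exp_mul_div_le hβ h1x
  have hrecip : exp (β * (1 - x)) / x + exp (β * (1 - x)) / (1 - x) =
      (x * (1 - x) * exp (β * (x - 1)))⁻¹ := by
    rw [show β * (x - 1) = -(β * (1 - x)) by ring, exp_neg]
    field_simp
    ring
  have hF : 0 < x * (1 - x) * exp (β * (x - 1)) := by positivity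
  calc 1 = (exp (β * (1 - x)) / x + exp (β * (1 - x)) / (1 - x)) *
        (x * (1 - x) * exp (β * (x - 1))) := by rw [hrecip, inv_mul_cancel₀ hF.ne']
    _ ≤ _ := mul_le_mul_of_nonneg_right (by linarith) hF.le

theorem monotoneOn_timeMajorant (hβ : 0 ≤ β) (hu₀ : 0 < u₀) :
    MonotoneOn (timeMajorant β u₀) (Iio 1) :=
  monotoneOn_of_hasDerivAt_nonneg (convex_Iio 1) (fun _ hx => hasDerivAt_timeMajorant hx)
    (fun x hx => by have : 0 < 1 - x := sub_pos.2 hx; positivity)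

theorem timeMajorant_sub_lt {c : ℝ} (hβ : 1 < β) (hc : 0 < c) (hu₀ : u₀ ∈ Ioc 0 1) :
    timeMajorant β u₀ (1 - exp (-c * β)) - timeMajorant β u₀ u₀ <
      exp (β * (1 - u₀)) / u₀ + β ^ 2 * c * exp 1 / (β - 1) := by
  obtain ⟨hu₀0, hu₀1⟩ := hu₀
  have hMu₀ : exp (β * (1 - u₀)) / u₀ * u₀ = exp (β * (1 - u₀)) := div_mul_cancel₀ _ hu₀0.ne'
  have hlog : log (1 - u₀) ≤ 0 := log_nonpos (by linarith) (by linarith)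
  have hslack : exp 1 * (c * β) < β ^ 2 * c * exp 1 / (β - 1) := by
    rw [lt_div_iff₀ (by linarith)]
    nlinarith [show 0 < exp 1 * c * β by positivity]
  have hε : 0 < exp (β * (1 - u₀)) / u₀ * exp (-c * β) := by positivity
  unfold timeMajorant
  rw [sub_sub_cancel, log_exp, hMu₀]
  nlinarith [exp_pos (β * exp (-c * β)), mul_nonneg (exp_pos 1).le (neg_nonneg.2 hlog)]

end TimeMajorant

theorem stmt2 (β c u₀ : ℝ) (hβ : 1 < β) (hc : 0 < c) (hu₀ : u₀ ∈ Set.Ioc (0:ℝ) 1)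
    (u : ℝ → ℝ) (hrange : ∀ t, 0 ≤ t → u t ∈ Set.Icc (0:ℝ) 1)
    (hflow : ∀ t, 0 ≤ t → HasDerivAt u (u t * (1 - u t) * Real.exp (β * (u t - 1))) t)
    (h0 : u 0 = u₀) :
    sInf {t : ℝ | 0 ≤ t ∧ 1 - u t ≤ Real.exp (-c * β)} ≤
      Real.exp (β * (1 - u₀)) / u₀ + β ^ 2 * c * Real.exp 1 / (β - 1) := by
  set T := exp (β * (1 - u₀)) / u₀ + β ^ 2 * c * exp 1 / (β - 1)
  have hT : 0 ≤ T := by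
    have := hu₀.1
    have : 0 < β - 1 := by linarith
    positivity
  by_contra! hlt
  have hfar : u T < 1 - exp (-c * β) := by
    by_contra! h
    exact hlt.not_ge (csInf_le ⟨0, fun _ ht => ht.1⟩ ⟨hT, by linarith⟩)
  have hmono : MonotoneOn u (Ici 0) :=
    monotoneOn_of_hasDerivAt_nonneg (convex_Ici 0) hflow fun t ht => by
      obtain ⟨h0t, ht1⟩ := hrange t ht
      have : 0 ≤ 1 - u t := sub_nonneg.2 ht1
      positivity
  have hbounds : ∀ t ∈ Icc 0 T, u₀ ≤ u t ∧ u t < 1 := fun t ht =>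
    ⟨h0 ▸ hmono self_mem_Ici ht.1 ht.1,
      (hmono ht.1 hT ht.2).trans_lt (hfar.trans (sub_lt_self 1 (exp_pos _)))⟩
  have hβ0 : 0 ≤ β := by linarith
  have hclock : T - 0 ≤ timeMajorant β u₀ (u T) - timeMajorant β u₀ (u 0) :=
    sub_le_sub_of_hasDerivAt_of_one_le hT
      (fun t ht => (hasDerivAt_timeMajorant (hbounds t ht).2).comp t (hflow t ht.1))
      (fun t ht => one_le_deriv_timeMajorant_mul hβ0 hu₀.1 (hbounds t ht).1 (hbounds t ht).2)
  have hstop : timeMajorant β u₀ (u T) ≤ timeMajorant β u₀ (1 - exp (-c * β)) :=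
    monotoneOn_timeMajorant hβ0 hu₀.1 (hbounds T ⟨hT, le_rfl⟩).2
      (sub_lt_self 1 (exp_pos _)) hfar.le
  have := timeMajorant_sub_lt hβ hc hu₀
  rw [h0] at hclock
  linarith
end

section
/- Fix β > 1, δ ∈ (0,1), α ∈ (-1,1) with (1/n) δ(1-δ) e^{-δβ} > n e^{-(1-α)β}. Suppose x₁(0),…,x_n(0) ∈ S^{d-1} satisfy ⟨x_i(0), x_j(0)⟩ ≥ 1-δ for all i,j in a subset I ⊂ {1,…,n}, and let (x_i(·)) solve the self-attention dynamics. If ⟨x_i(t), x_k(t)⟩ ≤ α for all i ∈ I, k ∉ I, and t ∈ [0,T], then ⟨x_i(t), x_j(t)⟩ ≥ 1-δ for all i,j ∈ I and t ∈ [0,T]. -/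
open RealInnerProductSpace Filter Topology Set

/-!
Let `m(t)` be the smallest inner product `⟪xᵢ(t), xⱼ(t)⟫` over pairs in `I`. Whenever
`m(t) = 1 - δ`, every pair realizing it has strictly positive derivative: the attention paid by
`xᵢ` to `xⱼ` is at least `e^{-δβ}/n` and pulls `xᵢ` towards `xⱼ`, while each of the at most `n`
particles outside `I` carries weight at most `e^{-(1-α)β}` and moves the inner product by at most
`2`. The separation hypothesis makes the first effect win, so by continuous induction `m` never
drops below `1 - δ`.
-/

lemma HasDerivAt.eventually_lt_of_deriv_pos {f : ℝ → ℝ} {f' x : ℝ} (hf : HasDerivAt f f' x)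
    (hpos : 0 < f') : ∀ᶠ y in 𝓝[>] x, f x < f y := by
  have hslope : Tendsto (slope f x) (𝓝[>] x) (𝓝 f') :=
    (hasDerivWithinAt_iff_tendsto_slope' self_notMem_Ioi).1 hf.hasDerivWithinAt
  filter_upwards [hslope.eventually (lt_mem_nhds hpos), self_mem_nhdsWithin] with y hy hxy
  exact (slope_pos_iff_of_le (le_of_lt hxy)).1 hy

theorem forall_le_of_deriv_pos_at_boundary {ι : Type*} [Finite ι] {g g' : ι → ℝ → ℝ}
    {c a b : ℝ} (hg : ∀ p t, HasDerivAt (g p) (g' p t) t) (ha : ∀ p, c ≤ g p a)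
    (hbdry : ∀ t ∈ Ico a b, ∀ p, (∀ q, c ≤ g q t) → g p t = c → 0 < g' p t) :
    ∀ t ∈ Icc a b, ∀ p, c ≤ g p t := by
  let s : Set ℝ := {t | ∀ p, c ≤ g p t}
  have hs : IsClosed s := by
    simp only [s, ofPred_forall]
    exact isClosed_iInter fun p =>
      isClosed_le continuous_const (continuous_iff_continuousAt.2 fun t => (hg p t).continuousAt)
  refine (hs.inter isClosed_Icc).Icc_subset_of_forall_mem_nhdsWithin ha ?_
  rintro t ⟨hts, htab⟩
  refine eventually_all.2 fun p => ?_
  rcases (hts p).lt_or_eq with hlt | heq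
  · exact (((hg p t).continuousAt.eventually (lt_mem_nhds hlt)).filter_mono
      nhdsWithin_le_nhds).mono fun _ => le_of_lt
  · exact ((hg p t).eventually_lt_of_deriv_pos (hbdry t htab p hts heq.symm)).mono
      fun _ hy => heq ▸ hy.le

section Attention

variable {E ι : Type*} [NormedAddCommGroup E] [InnerProductSpace ℝ E] [Fintype ι]

noncomputable def attnWeight (β : ℝ) (x : ι → E) (i j : ι) : ℝ :=
  Real.exp (β * ⟪x i, x j⟫) / ∑ k, Real.exp (β * ⟪x i, x k⟫)

/-- The velocity `P⊥_{xᵢ} Σⱼ a_{ij} xⱼ` of particle `i`, with the projection distributed over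
the sum. -/
noncomputable def attnField (β : ℝ) (x : ι → E) (i : ι) : E :=
  ∑ j, attnWeight β x i j • (x j - ⟪x i, x j⟫ • x i)

lemma attnWeight_nonneg (β : ℝ) (x : ι → E) (i j : ι) : 0 ≤ attnWeight β x i j :=
  div_nonneg (Real.exp_pos _).le (Finset.sum_nonneg fun _ _ => (Real.exp_pos _).le)

lemma inner_attnField (β : ℝ) (x : ι → E) (i : ι) (y : E) :
    ⟪attnField β x i, y⟫ = ∑ k, attnWeight β x i k * (⟪x k, y⟫ - ⟪x i, x k⟫ * ⟪x i, y⟫) := by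
  simp only [attnField, sum_inner, real_inner_smul_left, inner_sub_left]

lemma attnWeight_le_exp (β : ℝ) {x : ι → E} {i : ι} (hi : ‖x i‖ = 1) (k : ι) :
    attnWeight β x i k ≤ Real.exp (β * (⟪x i, x k⟫ - 1)) := by
  have hself : Real.exp β ≤ ∑ l, Real.exp (β * ⟪x i, x l⟫) := by
    simpa [real_inner_self_eq_norm_sq, hi] using
      Finset.single_le_sum (f := fun l => Real.exp (β * ⟪x i, x l⟫))
        (fun _ _ => (Real.exp_pos _).le) (Finset.mem_univ i)
  calc attnWeight β x i k ≤ Real.exp (β * ⟪x i, x k⟫) / Real.exp β :=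
        div_le_div_of_nonneg_left (Real.exp_pos _).le (Real.exp_pos β) hself
    _ = Real.exp (β * (⟪x i, x k⟫ - 1)) := by rw [← Real.exp_sub]; ring_nf

lemma exp_div_card_le_attnWeight {β : ℝ} (hβ : 0 ≤ β) {x : ι → E} (hx : ∀ k, ‖x k‖ = 1)
    (i j : ι) :
    Real.exp (β * (⟪x i, x j⟫ - 1)) / Fintype.card ι ≤ attnWeight β x i j := by
  have hsum : ∑ k, Real.exp (β * ⟪x i, x k⟫) ≤ Real.exp β * Fintype.card ι := by
    calc ∑ k, Real.exp (β * ⟪x i, x k⟫) ≤ ∑ _k : ι, Real.exp β :=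
          Finset.sum_le_sum fun k _ => Real.exp_le_exp.2 <|
            mul_le_of_le_one_right hβ (by simpa [hx] using real_inner_le_norm (x i) (x k))
      _ = Real.exp β * Fintype.card ι := by simp [mul_comm]
  have hpos : 0 < ∑ k, Real.exp (β * ⟪x i, x k⟫) :=
    Finset.sum_pos (fun _ _ => Real.exp_pos _) ⟨i, Finset.mem_univ i⟩
  have hexp : Real.exp (β * (⟪x i, x j⟫ - 1)) = Real.exp (β * ⟪x i, x j⟫) / Real.exp β := by
    rw [← Real.exp_sub]; ring_nf
  rw [hexp, div_div]
  exact div_le_div_of_nonneg_left (Real.exp_pos _).le hpos hsum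

theorem le_inner_attnField {β : ℝ} (hβ : 0 ≤ β) {x : ι → E} (hx : ∀ k, ‖x k‖ = 1)
    {I : Finset ι} {i j : ι} (hj : j ∈ I) {ρ α : ℝ} (hρ : 0 ≤ ρ)
    (hmin : ∀ k ∈ I, ρ ≤ ⟪x k, x j⟫) (hij : ⟪x i, x j⟫ = ρ) (hout : ∀ k ∉ I, ⟪x i, x k⟫ ≤ α) :
    (1 - ρ ^ 2) * Real.exp (β * (ρ - 1)) / Fintype.card ι
        - 2 * Fintype.card ι * Real.exp (-(1 - α) * β) ≤ ⟪attnField β x i, x j⟫ := by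
  classical
  have hip : ∀ k l, |⟪x k, x l⟫| ≤ 1 := fun k l => by
    simpa [hx] using abs_real_inner_le_norm (x k) (x l)
  have hρ1 : ρ ≤ 1 := hij ▸ (abs_le.1 (hip i j)).2
  rw [inner_attnField, hij, ← Finset.sum_add_sum_compl I]
  set w := attnWeight β x i
  have hin : (1 - ρ ^ 2) * Real.exp (β * (ρ - 1)) / Fintype.card ι ≤
      ∑ k ∈ I, w k * (⟪x k, x j⟫ - ⟪x i, x k⟫ * ρ) := by
    have hterm : ∀ k ∈ I, 0 ≤ w k * (⟪x k, x j⟫ - ⟪x i, x k⟫ * ρ) := fun k hk =>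
      mul_nonneg (attnWeight_nonneg β x i k) (by nlinarith [hmin k hk, (abs_le.1 (hip i k)).2])
    calc (1 - ρ ^ 2) * Real.exp (β * (ρ - 1)) / Fintype.card ι
        = Real.exp (β * (⟪x i, x j⟫ - 1)) / Fintype.card ι * (1 - ρ ^ 2) := by rw [hij]; ring
      _ ≤ w j * (1 - ρ ^ 2) :=
        mul_le_mul_of_nonneg_right (exp_div_card_le_attnWeight hβ hx i j) (by nlinarith)
      _ = w j * (⟪x j, x j⟫ - ⟪x i, x j⟫ * ρ) := by
        rw [real_inner_self_eq_norm_sq, hx, hij]; ring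
      _ ≤ _ := Finset.single_le_sum hterm hj
  have hout' : -(2 * Fintype.card ι * Real.exp (-(1 - α) * β)) ≤
      ∑ k ∈ Iᶜ, w k * (⟪x k, x j⟫ - ⟪x i, x k⟫ * ρ) := by
    have hterm : ∀ k ∈ Iᶜ, -(2 * Real.exp (-(1 - α) * β)) ≤
        w k * (⟪x k, x j⟫ - ⟪x i, x k⟫ * ρ) := by
      intro k hk
      have hwk : w k ≤ Real.exp (-(1 - α) * β) :=
        (attnWeight_le_exp β (hx i) k).trans <| Real.exp_le_exp.2 <| by
          nlinarith [hout k (Finset.mem_compl.1 hk)]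
      have hf : -2 ≤ ⟪x k, x j⟫ - ⟪x i, x k⟫ * ρ := by
        nlinarith [abs_le.1 (hip k j), abs_le.1 (hip i k)]
      nlinarith [mul_nonneg (attnWeight_nonneg β x i k)
        (by linarith : 0 ≤ 2 + (⟪x k, x j⟫ - ⟪x i, x k⟫ * ρ))]
    have hcard : ((Iᶜ).card : ℝ) ≤ Fintype.card ι := by exact_mod_cast Finset.card_le_univ Iᶜ
    calc -(2 * Fintype.card ι * Real.exp (-(1 - α) * β))
        ≤ (Iᶜ).card * -(2 * Real.exp (-(1 - α) * β)) := by
          nlinarith [Real.exp_pos (-(1 - α) * β)]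
      _ ≤ _ := by simpa using Finset.card_nsmul_le_sum Iᶜ _ _ hterm
  linarith

theorem inner_attnField_add_pos {β δ α : ℝ} (hβ : 0 ≤ β) (hδ : δ ≤ 1)
    (hsep : Fintype.card ι * Real.exp (-(1 - α) * β) <
      1 / Fintype.card ι * δ * (1 - δ) * Real.exp (-δ * β))
    {x : ι → E} (hx : ∀ k, ‖x k‖ = 1) {I : Finset ι} {i j : ι} (hi : i ∈ I) (hj : j ∈ I)
    (hmin : ∀ k ∈ I, ∀ l ∈ I, 1 - δ ≤ ⟪x k, x l⟫) (hij : ⟪x i, x j⟫ = 1 - δ)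
    (hout_i : ∀ k ∉ I, ⟪x i, x k⟫ ≤ α) (hout_j : ∀ k ∉ I, ⟪x j, x k⟫ ≤ α) :
    0 < ⟪x i, attnField β x j⟫ + ⟪attnField β x i, x j⟫ := by
  have hc0 : 0 ≤ 1 - δ := by linarith
  have hgap : 2 * (Fintype.card ι * Real.exp (-(1 - α) * β)) <
      (1 - (1 - δ) ^ 2) * Real.exp (β * ((1 - δ) - 1)) / Fintype.card ι := by
    have hsplit : (1 - (1 - δ) ^ 2) * Real.exp (β * ((1 - δ) - 1)) / Fintype.card ι =
        2 * (1 / Fintype.card ι * δ * (1 - δ) * Real.exp (-δ * β)) +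
          δ ^ 2 * Real.exp (-δ * β) / Fintype.card ι := by
      ring_nf
    have : 0 ≤ δ ^ 2 * Real.exp (-δ * β) / Fintype.card ι := by positivity
    linarith
  have hto_j := le_inner_attnField hβ hx hj hc0 (fun k hk => hmin k hk j hj) hij hout_i
  have hto_i := le_inner_attnField hβ hx hi hc0 (fun k hk => hmin k hk i hi)
    (real_inner_comm (x i) (x j) ▸ hij) hout_j
  rw [real_inner_comm _ (x i)]
  linarith

end Attention

theorem stmt6_general {d n : ℕ} (β δ α T : ℝ) (hβ : 1 < β) (hδ : δ ∈ Set.Ioo (0:ℝ) 1)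
    (hsep : (1 / (n : ℝ)) * δ * (1 - δ) * Real.exp (-δ * β) >
      (n : ℝ) * Real.exp (-(1 - α) * β))
    (x : Fin n → ℝ → EuclideanSpace ℝ (Fin d))
    (hsphere : ∀ i t, ‖x i t‖ = 1)
    (hflow : ∀ i t, HasDerivAt (x i)
      (∑ j, (Real.exp (β * ⟪x i t, x j t⟫) / ∑ k, Real.exp (β * ⟪x i t, x k t⟫)) •
        (x j t - ⟪x i t, x j t⟫ • x i t)) t)
    (I : Finset (Fin n))
    (hinit : ∀ i ∈ I, ∀ j ∈ I, 1 - δ ≤ ⟪x i 0, x j 0⟫)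
    (hout : ∀ i ∈ I, ∀ k ∉ I, ∀ t ∈ Set.Icc (0:ℝ) T, ⟪x i t, x k t⟫ ≤ α) :
    ∀ i ∈ I, ∀ j ∈ I, ∀ t ∈ Set.Icc (0:ℝ) T, 1 - δ ≤ ⟪x i t, x j t⟫ := by
  have hsep' : Fintype.card (Fin n) * Real.exp (-(1 - α) * β) <
      1 / Fintype.card (Fin n) * δ * (1 - δ) * Real.exp (-δ * β) := by
    rwa [Fintype.card_fin]
  have key := forall_le_of_deriv_pos_at_boundary (ι := I × I) (c := 1 - δ) (a := 0) (b := T)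
    (g := fun p t => ⟪x p.1 t, x p.2 t⟫)
    (g' := fun p t => ⟪x p.1 t, attnField β (x · t) p.2⟫ + ⟪attnField β (x · t) p.1, x p.2 t⟫)
    (fun p t => (hflow p.1 t).inner ℝ (hflow p.2 t)) (fun p => hinit _ p.1.2 _ p.2.2) <| by
      rintro t ht ⟨⟨i, hi⟩, ⟨j, hj⟩⟩ hmin hij
      have htT := Ico_subset_Icc_self ht
      exact inner_attnField_add_pos (by linarith) hδ.2.le hsep' (hsphere · t) hi hj
        (fun k hk l hl => hmin (⟨k, hk⟩, ⟨l, hl⟩)) hij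
        (fun k hk => hout i hi k hk t htT) (fun k hk => hout j hj k hk t htT)
  exact fun i hi j hj t ht => key t ht (⟨i, hi⟩, ⟨j, hj⟩)

theorem stmt6 {d n : ℕ} (β δ α T : ℝ) (hβ : 1 < β) (hδ : δ ∈ Set.Ioo (0:ℝ) 1)
    (hα : α ∈ Set.Ioo (-1:ℝ) 1)
    (hsep : (1 / (n : ℝ)) * δ * (1 - δ) * Real.exp (-δ * β) >
      (n : ℝ) * Real.exp (-(1 - α) * β))
    (x : Fin n → ℝ → EuclideanSpace ℝ (Fin d))
    (hsphere : ∀ i t, ‖x i t‖ = 1)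
    (hflow : ∀ i t, HasDerivAt (x i)
      (∑ j, (Real.exp (β * ⟪x i t, x j t⟫) / ∑ k, Real.exp (β * ⟪x i t, x k t⟫)) •
        (x j t - ⟪x i t, x j t⟫ • x i t)) t)
    (I : Finset (Fin n))
    (hinit : ∀ i ∈ I, ∀ j ∈ I, 1 - δ ≤ ⟪x i 0, x j 0⟫)
    (hT : 0 ≤ T)
    (hout : ∀ i ∈ I, ∀ k ∉ I, ∀ t ∈ Set.Icc (0:ℝ) T, ⟪x i t, x k t⟫ ≤ α) :
    ∀ i ∈ I, ∀ j ∈ I, ∀ t ∈ Set.Icc (0:ℝ) T, 1 - δ ≤ ⟪x i t, x j t⟫ :=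
  stmt6_general β δ α T hβ hδ hsep x hsphere hflow I hinit hout
end

section
/- Let g(x) = (cos x - β sin² x) e^{β(cos x - 1)} with β > 1. If |x| ≤ (1/8)√((1-δ)/(β + 1/2)) for some δ ∈ (0,1), then g(x) ≥ δ e^{-1/2}. -/
theorem stmt9 (β δ x : ℝ) (hβ : 1 < β) (hδ : δ ∈ Set.Ioo (0:ℝ) 1)
    (hx : |x| ≤ (1/8) * Real.sqrt ((1 - δ) / (β + 1/2))) :
    δ * Real.exp (-1/2) ≤
      (Real.cos x - β * Real.sin x ^ 2) * Real.exp (β * (Real.cos x - 1)) := by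
  obtain ⟨hδ0, hδ1⟩ := hδ
  have hβ0 : (0:ℝ) < β + 1/2 := by linarith
  have ht : (0:ℝ) ≤ (1 - δ) / (β + 1/2) := div_nonneg (by linarith) hβ0.le
  have hx2 : x ^ 2 ≤ (1/64) * ((1 - δ) / (β + 1/2)) := by
    have h := sq_le_sq' (neg_le_of_abs_le hx) (le_of_abs_le hx)
    calc x ^ 2 ≤ ((1/8) * Real.sqrt ((1 - δ) / (β + 1/2))) ^ 2 := h
    _ = (1/64) * ((1 - δ) / (β + 1/2)) := by
        rw [mul_pow, Real.sq_sqrt ht]; ring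
  have hcos : 1 - x ^ 2 / 2 ≤ Real.cos x := Real.one_sub_sq_div_two_le_cos
  have hsin : Real.sin x ^ 2 ≤ x ^ 2 := Real.sin_sq_le_sq
  have key : (β + 1/2) * x ^ 2 ≤ 1 - δ := by
    calc (β + 1/2) * x ^ 2 ≤ (β + 1/2) * ((1/64) * ((1 - δ) / (β + 1/2))) :=
          by exact mul_le_mul_of_nonneg_left hx2 (le_of_lt hβ0)
    _ = (1/64) * (1 - δ) := by field_simp
    _ ≤ 1 - δ := by linarith
  have h1 : δ ≤ Real.cos x - β * Real.sin x ^ 2 := by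
    have : β * Real.sin x ^ 2 ≤ β * x ^ 2 :=
      mul_le_mul_of_nonneg_left hsin (by linarith)
    nlinarith
  have h2 : (-1/2 : ℝ) ≤ β * (Real.cos x - 1) := by
    have hb : β * x ^ 2 ≤ 1 - δ := by nlinarith [sq_nonneg x]
    nlinarith
  calc δ * Real.exp (-1/2) ≤ δ * Real.exp (β * (Real.cos x - 1)) := by
        exact mul_le_mul_of_nonneg_left (Real.exp_le_exp.2 h2) hδ0.le
  _ ≤ (Real.cos x - β * Real.sin x ^ 2) * Real.exp (β * (Real.cos x - 1)) := by
        exact mul_le_mul_of_nonneg_right h1 (Real.exp_pos _).le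
end

section
/- Let N ~ 𝒩(0, I_d) be a standard Gaussian in ℝ^d, w ∈ S^{d-1} a unit vector, and δ > 0 with δ√d < 1. Then 𝔼[1/(1 + δ‖N‖)] ≥ 1/(1 + δ√d) and 𝔼[δ‖N‖/(1 + δ‖N‖)] ≤ δ√d/(1 + δ√d). Consequently, 𝔼[⟨(w + δN)/‖w + δN‖, w⟩] ≥ 1 - 3δ√d/(1 + δ√d), hence 𝔼[‖(w + δN)/‖w + δN‖ - w‖²] ≤ 6δ√d/(1 + δ√d). -/
/-
Concavity of `t ↦ t / (1 + t)`, used through its tangent line at `s = δ √d`, together with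
`𝔼 ‖N‖ ≤ √(𝔼 ‖N‖²) = √d`, gives the first two bounds. For `u = w + δ N`, a case split on the
sign of `⟪u, w⟫ = 1 + δ ⟪N, w⟫` (using `‖u‖ ≤ 1 + δ ‖N‖`) gives the pointwise bound
`⟪u / ‖u‖, w⟫ ≥ (1 + δ ⟪N, w⟫ - 2 δ ‖N‖) / (1 + δ ‖N‖)`. The part `δ ⟪N, w⟫ / (1 + δ ‖N‖)` is
odd in `N`, so it integrates to zero against the symmetric Gaussian, leaving
`3 𝔼 [1 / (1 + δ ‖N‖)] - 2`. Finally `‖v - w‖² ≤ 2 - 2 ⟪v, w⟫` whenever `‖v‖ ≤ 1 = ‖w‖`.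
-/

open RealInnerProductSpace MeasureTheory ProbabilityTheory Module

lemma integral_le_sqrt_integral_sq {Ω : Type*} {m : MeasurableSpace Ω} {μ : Measure Ω}
    [IsProbabilityMeasure μ] {f : Ω → ℝ} (hf : MemLp f 2 μ) :
    ∫ x, f x ∂μ ≤ √(∫ x, f x ^ 2 ∂μ) := by
  have h := variance_eq_sub hf ▸ variance_nonneg f μ
  exact (le_abs_self _).trans (Real.abs_le_sqrt (by simpa using h))

lemma integral_eq_zero_of_odd {G : Type*} [MeasurableSpace G] [AddGroup G] [MeasurableNeg G]
    {μ : Measure G} [μ.IsNegInvariant] {f : G → ℝ} (hf : Function.Odd f) : ∫ x, f x ∂μ = 0 := by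
  have h := integral_neg_eq_self f μ
  rw [show (fun x ↦ f (-x)) = fun x ↦ -f x from funext hf, integral_neg] at h
  linarith

section StdGaussian

variable {E : Type*} [NormedAddCommGroup E] [InnerProductSpace ℝ E] [FiniteDimensional ℝ E]
  [MeasurableSpace E] [BorelSpace E]

lemma integral_inner_sq_stdGaussian (v : E) : ∫ x, ⟪v, x⟫ ^ 2 ∂stdGaussian E = ‖v‖ ^ 2 := by
  have h := covarianceBilin_apply (μ := stdGaussian E) IsGaussian.memLp_two_id v v
  rw [covarianceBilin_stdGaussian, innerSL_apply_apply, real_inner_self_eq_norm_sq] at h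
  simp [h, sq]

lemma integral_norm_sq_stdGaussian : ∫ x, ‖x‖ ^ 2 ∂stdGaussian E = finrank ℝ E := by
  have hint (v : E) : Integrable (fun x ↦ ⟪v, x⟫ ^ 2) (stdGaussian E) :=
    (IsGaussian.memLp_two_id.const_inner v).integrable_sq
  simp_rw [← (stdOrthonormalBasis ℝ E).sum_sq_inner_right]
  rw [integral_finsetSum _ fun i _ ↦ hint _]
  simp [integral_inner_sq_stdGaussian]

lemma integral_norm_stdGaussian_le : ∫ x, ‖x‖ ∂stdGaussian E ≤ √(finrank ℝ E) :=
  integral_norm_sq_stdGaussian (E := E) ▸ integral_le_sqrt_integral_sq IsGaussian.memLp_two_id.norm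

instance isNegInvariant_stdGaussian : (stdGaussian E).IsNegInvariant :=
  ⟨stdGaussian_map (LinearIsometryEquiv.neg ℝ)⟩

end StdGaussian

lemma div_one_add_le_tangent {s t : ℝ} (hs : 0 ≤ s) (ht : 0 ≤ t) :
    t / (1 + t) ≤ s / (1 + s) + (t - s) / (1 + s) ^ 2 := by
  have hgap : s / (1 + s) + (t - s) / (1 + s) ^ 2 - t / (1 + t)
      = (t - s) ^ 2 / ((1 + s) ^ 2 * (1 + t)) := by
    field_simp
    ring
  have : 0 ≤ (t - s) ^ 2 / ((1 + s) ^ 2 * (1 + t)) := by positivity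
  linarith

section Probability

variable {Ω : Type*} {m : MeasurableSpace Ω} {μ : Measure Ω} [IsProbabilityMeasure μ]
  {f : Ω → ℝ} {s : ℝ}

lemma integrable_div_one_add (hf : Integrable f μ) (hf0 : 0 ≤ f) :
    Integrable (fun x ↦ f x / (1 + f x)) μ := by
  refine .of_bound (hf.aemeasurable.div (hf.aemeasurable.const_add 1)).aestronglyMeasurable 1
    (.of_forall fun x ↦ ?_)
  have hx : 0 ≤ f x := hf0 x
  rw [Real.norm_of_nonneg (by positivity), div_le_one (by positivity)]
  linarith

lemma integral_div_one_add_le (hf : Integrable f μ) (hf0 : 0 ≤ f) (hs : 0 ≤ s)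
    (hfs : ∫ x, f x ∂μ ≤ s) : ∫ x, f x / (1 + f x) ∂μ ≤ s / (1 + s) := by
  have hlin : Integrable (fun x ↦ (f x - s) / (1 + s) ^ 2) μ :=
    (hf.sub (integrable_const s)).div_const _
  calc ∫ x, f x / (1 + f x) ∂μ ≤ ∫ x, s / (1 + s) + (f x - s) / (1 + s) ^ 2 ∂μ :=
        integral_mono (integrable_div_one_add hf hf0) ((integrable_const _).add hlin)
          fun x ↦ div_one_add_le_tangent hs (hf0 x)
    _ = s / (1 + s) + (∫ x, f x ∂μ - s) / (1 + s) ^ 2 := by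
        rw [integral_add (integrable_const _) hlin, integral_div ((1 + s) ^ 2),
          integral_sub hf (integrable_const _)]
        simp
    _ ≤ s / (1 + s) := by
        have : (∫ x, f x ∂μ - s) / (1 + s) ^ 2 ≤ 0 :=
          div_nonpos_of_nonpos_of_nonneg (by linarith) (by positivity)
        linarith

lemma le_integral_one_div_one_add (hf : Integrable f μ) (hf0 : 0 ≤ f) (hs : 0 ≤ s)
    (hfs : ∫ x, f x ∂μ ≤ s) : 1 / (1 + s) ≤ ∫ x, 1 / (1 + f x) ∂μ := by
  have hsplit (t : ℝ) (ht : 0 ≤ t) : 1 / (1 + t) = 1 - t / (1 + t) := by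
    field_simp; ring
  have h := integral_div_one_add_le hf hf0 hs hfs
  rw [hsplit s hs, integral_congr_ae (.of_forall fun x ↦ hsplit (f x) (hf0 x)),
    integral_sub (integrable_const _) (integrable_div_one_add hf hf0)]
  simp only [integral_const, probReal_univ, smul_eq_mul, one_mul]
  linarith

end Probability

section Geometry

variable {F : Type*} [NormedAddCommGroup F] [InnerProductSpace ℝ F]

lemma norm_inv_norm_smul_le_one (u : F) : ‖‖u‖⁻¹ • u‖ ≤ 1 := by
  rcases eq_or_ne u 0 with rfl | hu
  · simp
  · simp [norm_smul, hu]

lemma norm_sub_sq_le_two_sub_two_inner {v w : F} (hv : ‖v‖ ≤ 1) (hw : ‖w‖ = 1) :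
    ‖v - w‖ ^ 2 ≤ 2 - 2 * ⟪v, w⟫ := by
  rw [norm_sub_sq_real, hw]
  nlinarith [norm_nonneg v]

lemma le_inner_inv_norm_smul_add {w y : F} (hw : ‖w‖ = 1) :
    (1 + ⟪y, w⟫ - 2 * ‖y‖) / (1 + ‖y‖) ≤ ⟪‖w + y‖⁻¹ • (w + y), w⟫ := by
  set u := w + y
  have hyw : |⟪y, w⟫| ≤ ‖y‖ := by simpa [hw] using abs_real_inner_le_norm y w
  have huw : ⟪u, w⟫ = 1 + ⟪y, w⟫ := by
    rw [inner_add_left, real_inner_self_eq_norm_sq, hw, one_pow]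
  have hu_le : ‖u‖ ≤ 1 + ‖y‖ := hw ▸ norm_add_le w y
  have hcs : |⟪u, w⟫| ≤ ‖u‖ := by simpa [hw] using abs_real_inner_le_norm u w
  rw [real_inner_smul_left, ← div_eq_inv_mul]
  rcases eq_or_ne u 0 with hu | hu
  · have ha : 1 + ⟪y, w⟫ = 0 := by rw [← huw, hu, inner_zero_left]
    rw [ha, hu, norm_zero, div_zero, zero_sub]
    exact div_nonpos_of_nonpos_of_nonneg (by simp) (by positivity)
  have hu0 : 0 < ‖u‖ := norm_pos_iff.mpr hu
  rw [huw] at hcs ⊢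
  rcases le_or_gt 0 (1 + ⟪y, w⟫) with ha | ha
  · calc (1 + ⟪y, w⟫ - 2 * ‖y‖) / (1 + ‖y‖) ≤ (1 + ⟪y, w⟫) / (1 + ‖y‖) := by
          gcongr; linarith [norm_nonneg y]
      _ ≤ (1 + ⟪y, w⟫) / ‖u‖ := div_le_div_of_nonneg_left ha hu0 hu_le
  · calc (1 + ⟪y, w⟫ - 2 * ‖y‖) / (1 + ‖y‖) ≤ -1 := by
          rw [div_le_iff₀ (by positivity)]
          linarith [neg_abs_le ⟪y, w⟫]
      _ ≤ (1 + ⟪y, w⟫) / ‖u‖ := by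
          rw [le_div_iff₀ hu0]
          linarith [neg_abs_le (1 + ⟪y, w⟫)]

end Geometry

section SymmetricMeasure

variable {F : Type*} [NormedAddCommGroup F] [InnerProductSpace ℝ F] [MeasurableSpace F]
  [BorelSpace F] [SecondCountableTopology F] {μ : Measure F} [IsProbabilityMeasure μ]
  {w : F} {δ : ℝ}

lemma integrable_inner_inv_norm_smul_add (hw : ‖w‖ = 1) (δ : ℝ) :
    Integrable (fun x ↦ ⟪‖w + δ • x‖⁻¹ • (w + δ • x), w⟫) μ := by
  refine .of_bound (by fun_prop) 1 (.of_forall fun x ↦ ?_)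
  calc ‖⟪‖w + δ • x‖⁻¹ • (w + δ • x), w⟫‖ ≤ ‖‖w + δ • x‖⁻¹ • (w + δ • x)‖ * ‖w‖ :=
        norm_inner_le_norm _ _
    _ ≤ 1 := by rw [hw, mul_one]; exact norm_inv_norm_smul_le_one _

lemma le_integral_inner_inv_norm_smul_add [μ.IsNegInvariant] (hw : ‖w‖ = 1) (hδ : 0 ≤ δ) :
    3 * ∫ x, 1 / (1 + δ * ‖x‖) ∂μ - 2 ≤ ∫ x, ⟪‖w + δ • x‖⁻¹ • (w + δ • x), w⟫ ∂μ := by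
  set g : F → ℝ := fun x ↦ ⟪δ • x, w⟫ / (1 + ‖δ • x‖)
  have hg_odd : Function.Odd g := fun x ↦ by simp [g, neg_div]
  have hg : Integrable g μ := by
    refine .of_bound (by fun_prop) 1 (.of_forall fun x ↦ ?_)
    rw [Real.norm_eq_abs, abs_div, abs_of_pos (by positivity : (0 : ℝ) < 1 + ‖δ • x‖),
      div_le_one (by positivity)]
    have := abs_real_inner_le_norm (δ • x) w
    rw [hw, mul_one] at this
    linarith
  have hinv : Integrable (fun x ↦ 1 / (1 + δ * ‖x‖)) μ := by
    refine .of_bound (Measurable.aestronglyMeasurable (by fun_prop)) 1 (.of_forall fun x ↦ ?_)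
    rw [Real.norm_of_nonneg (by positivity), div_le_one (by positivity)]
    nlinarith [norm_nonneg x]
  have hpt (x : F) : 3 * (1 / (1 + δ * ‖x‖)) - 2 + g x ≤ ⟪‖w + δ • x‖⁻¹ • (w + δ • x), w⟫ := by
    have h := le_inner_inv_norm_smul_add (y := δ • x) hw
    rw [norm_smul_of_nonneg hδ] at h
    convert h using 1
    simp only [g, norm_smul_of_nonneg hδ]
    field_simp
    ring
  have hlower : Integrable (fun x ↦ 3 * (1 / (1 + δ * ‖x‖)) - 2) μ :=
    (hinv.const_mul 3).sub (integrable_const 2)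
  calc 3 * ∫ x, 1 / (1 + δ * ‖x‖) ∂μ - 2
      = ∫ x, 3 * (1 / (1 + δ * ‖x‖)) - 2 + g x ∂μ := by
        rw [integral_add hlower hg, integral_sub (hinv.const_mul 3) (integrable_const 2),
          integral_const_mul, integral_eq_zero_of_odd hg_odd]
        simp
    _ ≤ _ := integral_mono (hlower.add hg) (integrable_inner_inv_norm_smul_add hw δ) hpt

lemma integral_norm_inv_norm_smul_add_sub_sq_le (hw : ‖w‖ = 1) (δ : ℝ) :
    ∫ x, ‖‖w + δ • x‖⁻¹ • (w + δ • x) - w‖ ^ 2 ∂μ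
      ≤ 2 - 2 * ∫ x, ⟪‖w + δ • x‖⁻¹ • (w + δ • x), w⟫ ∂μ := by
  have hpt (x : F) := norm_sub_sq_le_two_sub_two_inner (norm_inv_norm_smul_le_one (w + δ • x)) hw
  have hint := integrable_inner_inv_norm_smul_add (μ := μ) hw δ
  have hsq : Integrable (fun x ↦ ‖‖w + δ • x‖⁻¹ • (w + δ • x) - w‖ ^ 2) μ := by
    refine .of_bound (by fun_prop) 4 (.of_forall fun x ↦ ?_)
    have h := (norm_sub_le (‖w + δ • x‖⁻¹ • (w + δ • x)) w).trans
      (add_le_add (norm_inv_norm_smul_le_one (w + δ • x)) hw.le)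
    rw [Real.norm_of_nonneg (by positivity)]
    nlinarith [norm_nonneg (‖w + δ • x‖⁻¹ • (w + δ • x) - w)]
  calc _ ≤ ∫ x, 2 - 2 * ⟪‖w + δ • x‖⁻¹ • (w + δ • x), w⟫ ∂μ :=
        integral_mono hsq ((integrable_const 2).sub (hint.const_mul 2)) hpt
    _ = _ := by
        rw [integral_sub (integrable_const 2) (hint.const_mul 2), integral_const_mul]
        simp

end SymmetricMeasure

theorem stmt12_general {d : ℕ} (δ : ℝ) (hδ : 0 < δ)
    (w : EuclideanSpace ℝ (Fin d)) (hw : ‖w‖ = 1)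
    (μ : Measure (EuclideanSpace ℝ (Fin d)))
    (hμ : μ = Measure.map (MeasurableEquiv.toLp 2 (Fin d → ℝ))
      (Measure.pi fun _ : Fin d => ProbabilityTheory.gaussianReal 0 1)) :
    (1 / (1 + δ * Real.sqrt d) ≤ ∫ x, 1 / (1 + δ * ‖x‖) ∂μ) ∧
    (∫ x, δ * ‖x‖ / (1 + δ * ‖x‖) ∂μ ≤ δ * Real.sqrt d / (1 + δ * Real.sqrt d)) ∧
    (1 - 3 * δ * Real.sqrt d / (1 + δ * Real.sqrt d) ≤
      ∫ x, ⟪(‖w + δ • x‖)⁻¹ • (w + δ • x), w⟫ ∂μ) ∧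
    (∫ x, ‖(‖w + δ • x‖)⁻¹ • (w + δ • x) - w‖ ^ 2 ∂μ ≤
      6 * δ * Real.sqrt d / (1 + δ * Real.sqrt d)) := by
  have hμ' : μ = stdGaussian (EuclideanSpace ℝ (Fin d)) := hμ.trans map_pi_eq_stdGaussian
  subst hμ'
  have hf : Integrable (fun x ↦ δ * ‖x‖) (stdGaussian (EuclideanSpace ℝ (Fin d))) :=
    IsGaussian.integrable_id.norm.const_mul δ
  have hf0 : 0 ≤ fun x : EuclideanSpace ℝ (Fin d) ↦ δ * ‖x‖ := fun x ↦ by positivity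
  have hs : 0 ≤ δ * √d := by positivity
  have hmean : ∫ x, δ * ‖x‖ ∂stdGaussian (EuclideanSpace ℝ (Fin d)) ≤ δ * √d := by
    rw [integral_const_mul]
    gcongr
    simpa using integral_norm_stdGaussian_le (E := EuclideanSpace ℝ (Fin d))
  have h1 := le_integral_one_div_one_add hf hf0 hs hmean
  have h3 := le_integral_inner_inv_norm_smul_add
    (μ := stdGaussian (EuclideanSpace ℝ (Fin d))) hw hδ.le
  have h4 := integral_norm_inv_norm_smul_add_sub_sq_le
    (μ := stdGaussian (EuclideanSpace ℝ (Fin d))) hw δ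
  have hbound : 1 - 3 * δ * √d / (1 + δ * √d) = 3 * (1 / (1 + δ * √d)) - 2 := by
    field_simp
    ring
  refine ⟨h1, integral_div_one_add_le hf hf0 hs hmean, by linarith, ?_⟩
  have : 6 * δ * √d / (1 + δ * √d) = 2 - 2 * (1 - 3 * δ * √d / (1 + δ * √d)) := by ring
  linarith

theorem stmt12 {d : ℕ} (hd : 0 < d) (δ : ℝ) (hδ : 0 < δ) (hδd : δ * Real.sqrt d < 1)
    (w : EuclideanSpace ℝ (Fin d)) (hw : ‖w‖ = 1)
    (μ : Measure (EuclideanSpace ℝ (Fin d)))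
    (hμ : μ = Measure.map (MeasurableEquiv.toLp 2 (Fin d → ℝ))
      (Measure.pi fun _ : Fin d => ProbabilityTheory.gaussianReal 0 1)) :
    (1 / (1 + δ * Real.sqrt d) ≤ ∫ x, 1 / (1 + δ * ‖x‖) ∂μ) ∧
    (∫ x, δ * ‖x‖ / (1 + δ * ‖x‖) ∂μ ≤ δ * Real.sqrt d / (1 + δ * Real.sqrt d)) ∧
    (1 - 3 * δ * Real.sqrt d / (1 + δ * Real.sqrt d) ≤
      ∫ x, ⟪(‖w + δ • x‖)⁻¹ • (w + δ • x), w⟫ ∂μ) ∧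
    (∫ x, ‖(‖w + δ • x‖)⁻¹ • (w + δ • x) - w‖ ^ 2 ∂μ ≤
      6 * δ * Real.sqrt d / (1 + δ * Real.sqrt d)) :=
  stmt12_general δ hδ w hw μ hμ
end

section
/- Suppose x₁,…,x_n ∈ S^{d-1} lie in k spherical caps S_q(ε) = {x : ⟨x, w_q⟩ ≥ 1-ε} with pairwise cap separation α = max over distinct caps of ⟨x,y⟩ for x,y in different caps, and each cap nonempty. Then E_β(x₁,…,x_n) ≥ 1/(2βn) and moreover, if n_q particles lie in cap q, then (2βe^β n²) E_β ≥ Σ_q n_q² e^{(1-8ε)β} with the cross-cap terms bounded above by (n² - Σ_q n_q²) e^{αβ}; hence E_β ≥ (Σ_q n_q²/(2βn²)) e^{-8εβ}. -/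
/-!
Two particles in the same cap are close: the triangle inequality through the cap centre gives
`⟪x, y⟫ ≥ 1 - 8ε`, so each of the `∑_q n_q²` same-cap pairs contributes at least `e^{(1-8ε)β}` to
the energy, while each of the remaining `n² - ∑_q n_q²` pairs contributes at most `e^{αβ}`.
Keeping only the `n` diagonal terms, each equal to `e^β`, gives `E_β ≥ 1/(2βn)`.
-/

open Finset RealInnerProductSpace

section Caps

variable {E : Type*} [NormedAddCommGroup E] [InnerProductSpace ℝ E]

lemma norm_sub_sq_of_norm_eq_one {x y : E} (hx : ‖x‖ = 1) (hy : ‖y‖ = 1) :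
    ‖x - y‖ ^ 2 = 2 - 2 * ⟪x, y⟫ := by
  rw [norm_sub_sq_real, hx, hy]; ring

lemma one_sub_four_mul_le_inner_of_mem_cap {x y w : E} {δ : ℝ}
    (hx : ‖x‖ = 1) (hy : ‖y‖ = 1) (hw : ‖w‖ = 1)
    (hxw : 1 - δ ≤ ⟪x, w⟫) (hyw : 1 - δ ≤ ⟪y, w⟫) :
    1 - 4 * δ ≤ ⟪x, y⟫ := by
  have hxy : ‖x - y‖ ≤ ‖x - w‖ + ‖y - w‖ := by
    simpa using norm_sub_le (x - w) (y - w)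
  have := norm_sub_sq_of_norm_eq_one hx hy
  have := norm_sub_sq_of_norm_eq_one hx hw
  have := norm_sub_sq_of_norm_eq_one hy hw
  -- `‖x - y‖² ≤ (‖x - w‖ + ‖y - w‖)² ≤ 2 (‖x - w‖² + ‖y - w‖²) ≤ 8δ`
  nlinarith [norm_nonneg (x - y), sq_nonneg (‖x - w‖ - ‖y - w‖)]

end Caps

section Fibres

variable {ι κ : Type*} [Fintype ι] [Fintype κ] [DecidableEq κ] (σ : ι → κ)

lemma card_pairs_same_fiber_eq_sum_sq :
    #{p : ι × ι | σ p.1 = σ p.2} = ∑ q, #{i | σ i = q} ^ 2 := by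
  rw [card_eq_sum_card_fiberwise (f := fun p : ι × ι ↦ σ p.1) (t := univ) fun _ _ ↦ mem_univ _]
  refine sum_congr rfl fun q _ ↦ ?_
  rw [sq, ← card_product, filter_filter]
  congr 1
  ext p
  simp only [mem_filter, mem_product, mem_univ, true_and]
  constructor
  · rintro ⟨h, rfl⟩; exact ⟨rfl, h.symm⟩
  · rintro ⟨h₁, h₂⟩; exact ⟨h₁.trans h₂.symm, h₁⟩

lemma card_pairs_diff_fiber_eq :
    (#{p : ι × ι | σ p.1 ≠ σ p.2} : ℝ) =
      (Fintype.card ι : ℝ) ^ 2 - ∑ q, (#{i | σ i = q} : ℝ) ^ 2 := by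
  have h := card_filter_add_card_filter_not (s := (univ : Finset (ι × ι)))
    (fun p ↦ σ p.1 = σ p.2)
  rw [card_pairs_same_fiber_eq_sum_sq, card_univ, Fintype.card_prod] at h
  have h' : ((∑ q, #{i | σ i = q} ^ 2 + #{p : ι × ι | σ p.1 ≠ σ p.2} : ℕ) : ℝ) =
      (Fintype.card ι * Fintype.card ι : ℕ) := congrArg Nat.cast h
  push_cast at h'
  linarith

variable {f : ι → ι → ℝ} {c : ℝ}

lemma sum_sq_card_fiber_mul_le_sum_sum (hf : ∀ i j, 0 ≤ f i j)
    (hc : ∀ i j, σ i = σ j → c ≤ f i j) :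
    (∑ q, (#{i | σ i = q} : ℝ) ^ 2) * c ≤ ∑ i, ∑ j, f i j := by
  have hcard : (∑ q, (#{i | σ i = q} : ℝ) ^ 2) = #{p : ι × ι | σ p.1 = σ p.2} := by
    rw [card_pairs_same_fiber_eq_sum_sq]; push_cast; rfl
  rw [hcard, ← nsmul_eq_mul, ← sum_product', ← univ_product_univ]
  calc #{p : ι × ι | σ p.1 = σ p.2} • c
      ≤ ∑ p ∈ {p : ι × ι | σ p.1 = σ p.2}, f p.1 p.2 :=
        card_nsmul_le_sum _ _ _ fun p hp ↦ hc p.1 p.2 (mem_filter.mp hp).2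
    _ ≤ ∑ p ∈ univ ×ˢ univ, f p.1 p.2 :=
        sum_le_sum_of_subset_of_nonneg (filter_subset _ _) fun p _ _ ↦ hf p.1 p.2

lemma sum_pairs_diff_fiber_le (hc : ∀ i j, σ i ≠ σ j → f i j ≤ c) :
    ∑ p ∈ {p : ι × ι | σ p.1 ≠ σ p.2}, f p.1 p.2 ≤
      ((Fintype.card ι : ℝ) ^ 2 - ∑ q, (#{i | σ i = q} : ℝ) ^ 2) * c := by
  rw [← card_pairs_diff_fiber_eq, ← nsmul_eq_mul]
  exact sum_le_card_nsmul _ _ _ fun p hp ↦ hc p.1 p.2 (mem_filter.mp hp).2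

end Fibres

lemma card_mul_exp_le_sum_sum_exp_inner {E ι : Type*} [NormedAddCommGroup E]
    [InnerProductSpace ℝ E] [Fintype ι] (β : ℝ) {x : ι → E} (hx : ∀ i, ‖x i‖ = 1) :
    Fintype.card ι * Real.exp β ≤ ∑ i, ∑ j, Real.exp (β * ⟪x i, x j⟫) := by
  rw [← nsmul_eq_mul, ← card_univ, ← sum_const]
  refine sum_le_sum fun i _ ↦ ?_
  have hii : Real.exp (β * ⟪x i, x i⟫) = Real.exp β := by
    rw [real_inner_self_eq_norm_sq, hx, one_pow, mul_one]
  exact hii ▸ single_le_sum (f := fun j ↦ Real.exp (β * ⟪x i, x j⟫))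
    (fun j _ ↦ (Real.exp_pos _).le) (mem_univ i)

lemma div_le_one_div_mul_of_mul_exp_le {β N m S : ℝ} (hβ : 0 < β) (hN : 0 ≤ N)
    (h : m * Real.exp β ≤ S) :
    m / (2 * β * N) ≤ 1 / (2 * β * Real.exp β * N) * S := by
  calc m / (2 * β * N) = 1 / (2 * β * Real.exp β * N) * (m * Real.exp β) := by
        field_simp
    _ ≤ _ := mul_le_mul_of_nonneg_left h (by positivity)

theorem stmt17_general {d n k : ℕ} (β ε α : ℝ) (hβ : 0 < β)
    (x : Fin n → EuclideanSpace ℝ (Fin d)) (hx : ∀ i, ‖x i‖ = 1)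
    (w : Fin k → EuclideanSpace ℝ (Fin d)) (hw : ∀ q, ‖w q‖ = 1)
    (σ : Fin n → Fin k)
    (hcap : ∀ i, 1 - 2 * ε ≤ ⟪x i, w (σ i)⟫)
    (hα : ∀ i j, σ i ≠ σ j → ⟪x i, x j⟫ ≤ α) :
    (1 / (2 * β * n) ≤
      (1 / (2 * β * Real.exp β * (n : ℝ) ^ 2)) * ∑ i, ∑ j, Real.exp (β * ⟪x i, x j⟫)) ∧
    (∑ q, ((Finset.univ.filter fun i => σ i = q).card : ℝ) ^ 2 *
        Real.exp ((1 - 8 * ε) * β) ≤ ∑ i, ∑ j, Real.exp (β * ⟪x i, x j⟫)) ∧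
    (∑ p ∈ Finset.univ.filter (fun p : Fin n × Fin n => σ p.1 ≠ σ p.2),
        Real.exp (β * ⟪x p.1, x p.2⟫) ≤
      ((n : ℝ) ^ 2 - ∑ q, ((Finset.univ.filter fun i => σ i = q).card : ℝ) ^ 2) *
        Real.exp (α * β)) ∧
    ((∑ q, ((Finset.univ.filter fun i => σ i = q).card : ℝ) ^ 2) / (2 * β * (n : ℝ) ^ 2) *
        Real.exp (-8 * ε * β) ≤
      (1 / (2 * β * Real.exp β * (n : ℝ) ^ 2)) * ∑ i, ∑ j, Real.exp (β * ⟪x i, x j⟫)) := by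
  have hsame (i j) (hij : σ i = σ j) : 1 - 8 * ε ≤ ⟪x i, x j⟫ := by
    have h := one_sub_four_mul_le_inner_of_mem_cap (hx i) (hx j) (hw (σ i)) (hcap i)
      (hij ▸ hcap j)
    linarith
  have hsame_pairs : ∑ q, ((univ.filter fun i => σ i = q).card : ℝ) ^ 2 *
      Real.exp ((1 - 8 * ε) * β) ≤ ∑ i, ∑ j, Real.exp (β * ⟪x i, x j⟫) := by
    rw [← sum_mul]
    refine sum_sq_card_fiber_mul_le_sum_sum σ (fun _ _ ↦ (Real.exp_pos _).le) fun i j hij ↦ ?_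
    exact Real.exp_le_exp.mpr (by nlinarith [hsame i j hij])
  have hdiag := card_mul_exp_le_sum_sum_exp_inner β hx
  rw [Fintype.card_fin] at hdiag
  refine ⟨?_, hsame_pairs, ?_, ?_⟩
  · calc 1 / (2 * β * n) = n / (2 * β * (n : ℝ) ^ 2) := by
          rcases eq_or_ne (n : ℝ) 0 with h | h
          · simp [h]
          · field_simp
      _ ≤ _ := div_le_one_div_mul_of_mul_exp_le hβ (by positivity) hdiag
  · simpa using sum_pairs_diff_fiber_le σ fun i j hij ↦
      Real.exp_le_exp.mpr (by nlinarith [hα i j hij] : β * ⟪x i, x j⟫ ≤ α * β)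
  · rw [div_mul_eq_mul_div]
    refine div_le_one_div_mul_of_mul_exp_le hβ (by positivity) ?_
    rw [mul_assoc, ← Real.exp_add, sum_mul]
    convert hsame_pairs using 4
    ring

theorem stmt17 {d n k : ℕ} (hn : 0 < n) (hk : 0 < k) (β ε α : ℝ) (hβ : 0 < β)
    (hε : 0 < ε) (hε' : ε < 1/4)
    (x : Fin n → EuclideanSpace ℝ (Fin d)) (hx : ∀ i, ‖x i‖ = 1)
    (w : Fin k → EuclideanSpace ℝ (Fin d)) (hw : ∀ q, ‖w q‖ = 1)
    (σ : Fin n → Fin k)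
    (hcap : ∀ i, 1 - 2 * ε ≤ ⟪x i, w (σ i)⟫)
    (hα : ∀ i j, σ i ≠ σ j → ⟪x i, x j⟫ ≤ α) :
    (1 / (2 * β * n) ≤
      (1 / (2 * β * Real.exp β * (n : ℝ) ^ 2)) * ∑ i, ∑ j, Real.exp (β * ⟪x i, x j⟫)) ∧
    (∑ q, ((Finset.univ.filter fun i => σ i = q).card : ℝ) ^ 2 *
        Real.exp ((1 - 8 * ε) * β) ≤ ∑ i, ∑ j, Real.exp (β * ⟪x i, x j⟫)) ∧
    (∑ p ∈ Finset.univ.filter (fun p : Fin n × Fin n => σ p.1 ≠ σ p.2),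
        Real.exp (β * ⟪x p.1, x p.2⟫) ≤
      ((n : ℝ) ^ 2 - ∑ q, ((Finset.univ.filter fun i => σ i = q).card : ℝ) ^ 2) *
        Real.exp (α * β)) ∧
    ((∑ q, ((Finset.univ.filter fun i => σ i = q).card : ℝ) ^ 2) / (2 * β * (n : ℝ) ^ 2) *
        Real.exp (-8 * ε * β) ≤
      (1 / (2 * β * Real.exp β * (n : ℝ) ^ 2)) * ∑ i, ∑ j, Real.exp (β * ⟪x i, x j⟫)) :=
  stmt17_general β ε α hβ x hx w hw σ hcap hα
end
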